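/- Let A be a finite hoop, F a filter of A with least element l, and X a congruence class in A/F with top element t_X. Then t_X · l = t_X ∧ l = l_X, the least element of X. -/
import Mathlib


/-- A hoop: a commutative monoid with a residuation-like arrow satisfying
(H1) `x → x = 1`, (H2) `(x·y) → z = x → (y → z)`, (H3) `x·(x→y) = y·(y→x)`. -/
class Hoop (α : Type*) extends CommMonoid α where
  arr : α → α → α
  arr_self : ∀ x : α, arr x x = 1
  arr_mul : ∀ x y z : α, arr (x * y) z = arr x (arr y z)
  divis : ∀ x y : α, x * arr x y = y * arr y x

namespace Hoop

variable {α β γ : Type*} [Hoop α] [Hoop β] [Hoop γ]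

/-- The induced order: `x ≤ y` iff `x → y = 1`. -/
def hle (x y : α) : Prop := arr x y = 1

/-- The induced meet: `x ∧ y = x·(x → y)`. -/
def hmeet (x y : α) : α := x * arr x y

/-- A filter of a hoop: a nonempty up-set closed under multiplication. -/
def IsFilter (F : Set α) : Prop :=
  F.Nonempty ∧ (∀ x ∈ F, ∀ y : α, hle x y → y ∈ F) ∧ ∀ x ∈ F, ∀ y ∈ F, x * y ∈ F

/-- The congruence induced by a filter: `x θ_F y` iff `(x→y)·(y→x) ∈ F`. -/
def frel (F : Set α) (x y : α) : Prop := arr x y * arr y x ∈ F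

/-- `x·(x→y) ≤ y`. -/
lemma mul_arr_le' (a b : α) : arr (a * arr a b) b = 1 := by
  rw [mul_comm, arr_mul, arr_self]

/-- `1 → x = x`. -/
lemma one_arr (x : α) : arr 1 x = x := by
  have h1 : arr x (arr 1 x) = 1 := by
    rw [← arr_mul, mul_one, arr_self]
  have h2 : arr (arr 1 x) x = 1 := by
    have h := mul_arr_le' 1 x
    rwa [one_mul] at h
  have h := divis x (arr 1 x)
  rw [h1, h2, mul_one, mul_one] at h
  exact h.symm

lemma mul_arr_one (x : α) : x * arr x 1 = x := by
  have h := divis x 1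
  rwa [one_arr, one_mul] at h

lemma arr_one (x : α) : arr x 1 = 1 := by
  have h := mul_arr_le' x 1
  rwa [mul_arr_one] at h

lemma hle_mul_of_hle {a b : α} (h : hle a b) : a = b * arr b a := by
  have hd := divis a b
  rw [show arr a b = 1 from h, mul_one] at hd
  exact hd

lemma htrans {a b c : α} (h1 : hle a b) (h2 : hle b c) : hle a c := by
  show arr a c = 1
  rw [hle_mul_of_hle h1, mul_comm, arr_mul, show arr b c = 1 from h2, arr_one]

lemma hle_antisymm {a b : α} (h1 : hle a b) (h2 : hle b a) : a = b := by
  have h := divis a b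
  rwa [show arr a b = 1 from h1, show arr b a = 1 from h2, mul_one, mul_one] at h

lemma hle_mul_left (c : α) {a b : α} (h : hle a b) : hle (c * a) (c * b) := by
  show arr (c * a) (c * b) = 1
  rw [hle_mul_of_hle h,
    show c * (b * arr b a) = arr b a * (c * b) by
      simp [mul_comm, mul_assoc, mul_left_comm],
    arr_mul, arr_self, arr_one]

lemma hle_mul_right (c : α) {a b : α} (h : hle a b) : hle (a * c) (b * c) := by
  have h' := hle_mul_left c h
  rwa [mul_comm c a, mul_comm c b] at h'

lemma hle_mul {a b c d : α} (h1 : hle a b) (h2 : hle c d) : hle (a * c) (b * d) :=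
  htrans (hle_mul_right c h1) (hle_mul_left b h2)

lemma arr_mul_arr_le (a b c : α) : hle (arr a b * arr b c) (arr a c) := by
  show arr (arr a b * arr b c) (arr a c) = 1
  rw [← arr_mul]
  have h1 : hle ((arr a b * arr b c) * a) (b * arr b c) := by
    rw [show (arr a b * arr b c) * a = arr b c * (a * arr a b) by
      simp [mul_comm, mul_assoc, mul_left_comm]]
    have := hle_mul_left (arr b c) (show hle (a * arr a b) b from mul_arr_le' a b)
    rwa [mul_comm (arr b c) b] at this
  exact htrans h1 (mul_arr_le' b c)

lemma frel_symm {F : Set α} {a b : α} (h : frel F a b) : frel F b a := by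
  show arr b a * arr a b ∈ F
  rwa [mul_comm]

lemma frel_trans {F : Set α} (hup : ∀ x ∈ F, ∀ y : α, hle x y → y ∈ F)
    (hm : ∀ x ∈ F, ∀ y ∈ F, x * y ∈ F) {a b c : α}
    (h1 : frel F a b) (h2 : frel F b c) : frel F a c := by
  have hp : (arr a b * arr b a) * (arr b c * arr c b) ∈ F := hm _ h1 _ h2
  have hp' : (arr a b * arr b c) * (arr c b * arr b a) ∈ F := by
    rwa [show (arr a b * arr b c) * (arr c b * arr b a)
        = (arr a b * arr b a) * (arr b c * arr c b) by
      simp [mul_comm, mul_assoc, mul_left_comm]]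
  exact hup _ hp' _ (hle_mul (arr_mul_arr_le a b c) (arr_mul_arr_le c b a))

/-- In a finite hoop with filter `F` whose least element is `l`, for a class `X`
with top `t_X` and bottom `l_X`: `t_X · l = t_X ∧ l = l_X`. -/
theorem top_mul_bot [Fintype α] (F : Set α) (hF : IsFilter F)
    (l : α) (hl : l ∈ F ∧ ∀ a ∈ F, hle l a)
    (x tX lX : α)
    (htX : frel F x tX ∧ ∀ c : α, frel F x c → hle c tX)
    (hlX : frel F x lX ∧ ∀ c : α, frel F x c → hle lX c) :
    tX * l = hmeet tX l ∧ hmeet tX l = lX := by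
  obtain ⟨hne, hup, hm⟩ := hF
  obtain ⟨hlF, hlmin⟩ := hl
  obtain ⟨hxt, htmax⟩ := htX
  obtain ⟨hxl, hlXmin⟩ := hlX
  -- Step A : arr l tX = tX
  have hA1 : hle tX (arr l tX) := by
    show arr tX (arr l tX) = 1
    rw [← arr_mul, mul_comm, arr_mul, arr_self, arr_one]
  have hA2 : hle l (arr (arr l tX) tX) := by
    show arr l (arr (arr l tX) tX) = 1
    rw [← arr_mul]
    exact mul_arr_le' l tX
  have hfrel1 : frel F tX (arr l tX) := by
    show arr tX (arr l tX) * arr (arr l tX) tX ∈ F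
    rw [show arr tX (arr l tX) = 1 from hA1, one_mul]
    exact hup l hlF _ hA2
  have hA : arr l tX = tX :=
    hle_antisymm (htmax _ (frel_trans hup hm hxt hfrel1)) hA1
  -- Goal 1
  have goal1 : tX * l = hmeet tX l := by
    unfold hmeet
    rw [divis, hA, mul_comm l tX]
  -- Step C : lX ≤ tX * l
  have hC1 : arr (tX * l) tX = 1 := by
    rw [mul_comm, arr_mul, arr_self, arr_one]
  have hC2 : hle l (arr tX (tX * l)) := by
    show arr l (arr tX (tX * l)) = 1
    rw [← arr_mul, mul_comm l tX, arr_self]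
  have hfrelC : frel F tX (tX * l) := by
    show arr tX (tX * l) * arr (tX * l) tX ∈ F
    rw [hC1, mul_one]
    exact hup l hlF _ hC2
  have hlelX : hle lX (tX * l) := hlXmin _ (frel_trans hup hm hxt hfrelC)
  -- Step D : tX * l ≤ lX
  have hltXlX : hle lX tX := hlXmin tX hxt
  have hfrelTL : frel F tX lX := frel_trans hup hm (frel_symm hxt) hxl
  have harr : arr tX lX ∈ F := by
    have h : arr tX lX * arr lX tX ∈ F := hfrelTL
    rwa [show arr lX tX = 1 from hltXlX, mul_one] at h
  have h2 : hle (tX * l) lX :=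
    htrans (hle_mul_left tX (hlmin _ harr))
      (show hle (tX * arr tX lX) lX from mul_arr_le' tX lX)
  have goal2 : tX * l = lX := hle_antisymm h2 hlelX
  exact ⟨goal1, by rw [← goal1]; exact goal2⟩

end Hoop
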